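/- arXiv:1607.07247 — 2 statements merged into one kernel-verified Lean document; each statement's English description precedes it below -/
import Mathlib

section
/- For every real number $q$ with $\frac{1}{2} \le q \le \frac{2}{3}$, the inequality $q^2 - 2q + 2 - h(q) \le \frac{1}{4}$ holds, and equality holds at $q = \frac{1}{2}$; consequently $\max_{q \in [1/2, 2/3]} \left( q^2 - 2q + 2 - h(q) \right) = \frac{1}{4}$. -/
/-- The binary entropy function in bits: `h x = -x log₂ x - (1-x) log₂ (1-x)`.
Since `Real.logb 2 0 = 0` in Mathlib, this satisfies `h 0 = h 1 = 0`. -/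
noncomputable def binEntropy2 (x : ℝ) : ℝ :=
  -x * Real.logb 2 x - (1 - x) * Real.logb 2 (1 - x)

/-!
`q ^ 2 - 2 q + 2` is convex and the binary entropy is concave, so the bound is convex on
`[1/2, 2/3]` and is maximised at an endpoint. At `q = 1/2` it equals `1/4` since `h (1/2) = 1`;
at `q = 2/3` it equals `16/9 - log₂ 3`, which is below `1/4` because `3 ^ 9 > 2 ^ 14` gives
`log₂ 3 > 14/9`.
-/

open Real Set

lemma binEntropy2_eq_binEntropy_div (x : ℝ) : binEntropy2 x = binEntropy x / log 2 := by
  simp only [binEntropy2, binEntropy, logb, log_inv]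
  ring

lemma binEntropy2_two_inv : binEntropy2 2⁻¹ = 1 := by
  rw [binEntropy2_eq_binEntropy_div, binEntropy_two_inv, div_self (log_pos one_lt_two).ne']

lemma binEntropy2_two_div_three : binEntropy2 (2 / 3) = logb 2 3 - 2 / 3 := by
  have hpq : logb 2 (2 / 3) = 1 - logb 2 3 := by
    rw [logb_div two_ne_zero three_ne_zero, logb_self_eq_one one_lt_two]
  have hq : logb 2 (1 - 2 / 3) = -logb 2 3 := by
    rw [show (1 - 2 / 3 : ℝ) = 3⁻¹ by norm_num, logb_inv]
  rw [binEntropy2, hpq, hq]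
  ring

lemma concaveOn_binEntropy2 : ConcaveOn ℝ (Icc 0 1) binEntropy2 := by
  have h := strictConcave_binEntropy.concaveOn.smul (inv_nonneg.2 (log_pos one_lt_two).le)
  have hfun : binEntropy2 = fun x => (log 2)⁻¹ • binEntropy x := by
    ext x
    rw [binEntropy2_eq_binEntropy_div, smul_eq_mul, div_eq_inv_mul]
  exact hfun ▸ h

lemma fourteen_div_nine_lt_logb_two_three : (14 / 9 : ℝ) < logb 2 3 := by
  rw [logb, lt_div_iff₀ (log_pos one_lt_two)]
  have h := log_lt_log (by norm_num) (show (2 : ℝ) ^ 14 < 3 ^ 9 by norm_num)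
  rw [log_pow, log_pow] at h
  push_cast at h
  linarith

lemma convexOn_quadratic : ConvexOn ℝ univ (fun q : ℝ => q ^ 2 - 2 * q + 2) := by
  have h := (even_two.convexOn_pow (𝕜 := ℝ)).translate_right (-1) |>.add_const 1
  rw [preimage_univ] at h
  refine h.congr fun q _ => ?_
  simp only [Pi.add_apply, Function.comp_apply]
  ring

noncomputable def aifvRedundancyBound (q : ℝ) : ℝ := q ^ 2 - 2 * q + 2 - binEntropy2 q

lemma convexOn_aifvRedundancyBound : ConvexOn ℝ (Icc 0 1) aifvRedundancyBound :=
  (convexOn_quadratic.subset (subset_univ _) (convex_Icc 0 1)).sub concaveOn_binEntropy2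

lemma aifvRedundancyBound_half : aifvRedundancyBound (1 / 2) = 1 / 4 := by
  rw [aifvRedundancyBound, one_div, binEntropy2_two_inv]
  norm_num

lemma aifvRedundancyBound_two_div_three_lt : aifvRedundancyBound (2 / 3) < 1 / 4 := by
  rw [aifvRedundancyBound, binEntropy2_two_div_three]
  linarith [fourteen_div_nine_lt_logb_two_three]

lemma aifvRedundancyBound_le_quarter {q : ℝ} (hq : q ∈ Icc (1 / 2 : ℝ) (2 / 3)) :
    aifvRedundancyBound q ≤ 1 / 4 := by
  have hseg : q ∈ segment ℝ (1 / 2 : ℝ) (2 / 3) := by rwa [segment_eq_Icc (by norm_num)]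
  calc aifvRedundancyBound q
      ≤ max (aifvRedundancyBound (1 / 2)) (aifvRedundancyBound (2 / 3)) :=
        convexOn_aifvRedundancyBound.le_on_segment (by norm_num) (by norm_num) hseg
    _ ≤ 1 / 4 := max_le aifvRedundancyBound_half.le aifvRedundancyBound_two_div_three_lt.le

theorem stmt_4 :
    (∀ q : ℝ, 1 / 2 ≤ q → q ≤ 2 / 3 → q ^ 2 - 2 * q + 2 - binEntropy2 q ≤ 1 / 4) ∧
    ((1 / 2 : ℝ) ^ 2 - 2 * (1 / 2) + 2 - binEntropy2 (1 / 2) = 1 / 4) ∧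
    IsGreatest ((fun q : ℝ => q ^ 2 - 2 * q + 2 - binEntropy2 q) '' Set.Icc (1 / 2) (2 / 3))
      (1 / 4) := by
  refine ⟨fun q h₁ h₂ => aifvRedundancyBound_le_quarter ⟨h₁, h₂⟩, aifvRedundancyBound_half,
    ⟨1 / 2, by norm_num, aifvRedundancyBound_half⟩, ?_⟩
  rintro _ ⟨q, hq, rfl⟩
  exact aifvRedundancyBound_le_quarter hq
end

section
/- For every real number $x$ with $\frac{1}{2} \le x < 1$, one has $f(x) < \frac{1}{2}$, where $f$ is the piecewise worst-case redundancy function of optimal binary AIFV codes. -/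
/-- The piecewise worst-case redundancy function of optimal binary AIFV codes:
`f x = x² - 2x + 2 - h x` for `x ≤ (-1+√5)/2` and
`f x = (-2x² + x + 2)/(1+x) - h x` otherwise. -/
noncomputable def aifvF (x : ℝ) : ℝ :=
  if x ≤ (-1 + Real.sqrt 5) / 2 then
    x ^ 2 - 2 * x + 2 - binEntropy2 x
  else
    (-2 * x ^ 2 + x + 2) / (1 + x) - binEntropy2 x

lemma binEntropy2_eq_binEntropy_div_log_two (x : ℝ) :
    binEntropy2 x = Real.binEntropy x / Real.log 2 := by
  unfold binEntropy2 Real.binEntropy Real.logb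
  rw [Real.log_inv, Real.log_inv]
  ring

lemma two_mul_one_sub_mul_log_two_le_binEntropy {x : ℝ} (hx : 1 / 2 ≤ x) (hx1 : x ≤ 1) :
    2 * (1 - x) * Real.log 2 ≤ Real.binEntropy x := by
  have hconcave := Real.strictConcave_binEntropy.concaveOn.2
    (show (2 : ℝ)⁻¹ ∈ Set.Icc 0 1 by norm_num) (show (1 : ℝ) ∈ Set.Icc 0 1 by norm_num)
    (show 0 ≤ 2 * (1 - x) by linarith) (show 0 ≤ 2 * x - 1 by linarith) (by ring)
  simp only [smul_eq_mul, Real.binEntropy_two_inv, Real.binEntropy_one, mul_zero, add_zero]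
    at hconcave
  rwa [show 2 * (1 - x) * 2⁻¹ + (2 * x - 1) * 1 = x by ring] at hconcave

lemma two_mul_one_sub_le_binEntropy2 {x : ℝ} (hx : 1 / 2 ≤ x) (hx1 : x ≤ 1) :
    2 * (1 - x) ≤ binEntropy2 x := by
  rw [binEntropy2_eq_binEntropy_div_log_two, le_div_iff₀ (Real.log_pos one_lt_two)]
  exact two_mul_one_sub_mul_log_two_le_binEntropy hx hx1

lemma sq_lt_half_of_le_goldenRatio_inv {x : ℝ} (hx : 0 ≤ x) (hxφ : x ≤ (-1 + Real.sqrt 5) / 2) :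
    x ^ 2 < 1 / 2 := by
  have hsqrt5 : Real.sqrt 5 < 2.4 := by
    rw [Real.sqrt_lt' (by norm_num)]
    norm_num
  nlinarith

theorem stmt_6 (x : ℝ) (h₁ : 1 / 2 ≤ x) (h₂ : x < 1) : aifvF x < 1 / 2 := by
  have hchord := two_mul_one_sub_le_binEntropy2 h₁ h₂.le
  unfold aifvF
  split_ifs with hφ
  · calc x ^ 2 - 2 * x + 2 - binEntropy2 x ≤ x ^ 2 := by linarith
      _ < 1 / 2 := sq_lt_half_of_le_goldenRatio_inv (by linarith) hφ
  · have hpos : 0 < 1 + x := by linarith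
    calc (-2 * x ^ 2 + x + 2) / (1 + x) - binEntropy2 x
        ≤ (-2 * x ^ 2 + x + 2) / (1 + x) - 2 * (1 - x) := by linarith
      _ = x / (1 + x) := by field_simp; ring
      _ < 1 / 2 := by rw [div_lt_iff₀ hpos]; linarith
end
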